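/- arXiv:2501.11791 — 6 statements merged into one kernel-verified Lean document; each statement's English description precedes it below -/
import Mathlib

section
/- Let M ∈ ℝ^{p×p} be symmetric positive definite with distinct eigenvalues λ_1 > … > λ_p and corresponding orthonormal eigenvectors v_1, …, v_p, let B ∈ ℝ^{p×p} be symmetric positive semidefinite, and suppose E_M(B) ⊆ span(v_1, …, v_d) for some d ≤ p. Define the envelope scores φ_j = v_j' B v_j for j = 1, …, d, let (1), …, (d) be a permutation of {1, …, d} with φ_(1) ≥ … ≥ φ_(d), and write v_(j) for the eigenvector corresponding to φ_(j). Then, with u* = dim(E_M(B)), one has E_M(B) = span(v_(1), …, v_(u*)) and φ_(1) ≥ … ≥ φ_(u*) > φ_(u*+1) = … = φ_(d) = 0. -/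
open Matrix

/-- The orthogonal projection onto a subspace `R` of Euclidean space, as a linear map
on the ambient space. -/
noncomputable def projL {p : ℕ} (R : Submodule ℝ (EuclideanSpace ℝ (Fin p))) :
    EuclideanSpace ℝ (Fin p) →ₗ[ℝ] EuclideanSpace ℝ (Fin p) :=
  R.subtype ∘ₗ (R.orthogonalProjectionOnto).toLinearMap

/-- `R` is a reducing subspace of the symmetric matrix `M` if `M = P_R M P_R + Q_R M Q_R`,
where `P_R` is the orthogonal projection onto `R` and `Q_R = I - P_R`. -/
def IsReducingSubspace {p : ℕ} (M : Matrix (Fin p) (Fin p) ℝ)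
    (R : Submodule ℝ (EuclideanSpace ℝ (Fin p))) : Prop :=
  Matrix.toEuclideanLin M =
    projL R ∘ₗ Matrix.toEuclideanLin M ∘ₗ projL R +
      (LinearMap.id - projL R) ∘ₗ Matrix.toEuclideanLin M ∘ₗ (LinearMap.id - projL R)

/-- The `M`-envelope of `span(B)`: the intersection of all reducing subspaces of `M`
containing the column space of `B`. -/
noncomputable def envelopeM {p : ℕ} (M B : Matrix (Fin p) (Fin p) ℝ) :
    Submodule ℝ (EuclideanSpace ℝ (Fin p)) :=
  sInf {R : Submodule ℝ (EuclideanSpace ℝ (Fin p)) |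
    IsReducingSubspace M R ∧ LinearMap.range (Matrix.toEuclideanLin B) ≤ R}

/-!
A subspace `R` reduces `M` exactly when its orthogonal projection commutes with `M`. The
projection then maps each eigenvector `v i` to an eigenvector for the same, simple,
eigenvalue, i.e. to a multiple of `v i`, and idempotence makes that multiple `0` or `1`:
every `v i` lies in `R` or in `Rᗮ`. Hence the envelope is spanned by the `v i` with
`B v i ≠ 0`, which (as `B ⪰ 0`) are those of positive score `⟪v i, B v i⟫`. Their number is
`u*`, they all lie among the first `d` eigenvectors, and since scores are nonnegative, sorting
them in decreasing order puts exactly the positive ones first.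
-/

theorem IsIdempotentElem.eq_mul_mul_add_mul_mul_iff_commute {R : Type*} [Ring R] {p t : R}
    (hp : IsIdempotentElem p) :
    t = p * t * p + (1 - p) * t * (1 - p) ↔ Commute p t := by
  constructor
  · intro h
    have hleft : p * t = p * t * p := by
      conv_lhs => rw [h]
      simp only [mul_add, ← mul_assoc, hp.eq, hp.mul_one_sub_self, zero_mul, add_zero]
    have hright : t * p = p * t * p := by
      conv_lhs => rw [h]
      simp only [add_mul, mul_assoc, hp.eq, hp.one_sub_mul_self, mul_zero, add_zero]
    exact hleft.trans hright.symm
  · intro hc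
    have hc' : Commute (1 - p) t := (Commute.one_left t).sub_left hc
    rw [hc.eq, hc'.eq, mul_assoc, hp.eq, mul_assoc, hp.one_sub.eq, ← mul_add, add_sub_cancel,
      mul_one]

theorem Submodule.isIdempotentElem_starProjection_toLinearMap {𝕜 E : Type*} [RCLike 𝕜]
    [NormedAddCommGroup E] [InnerProductSpace 𝕜 E] (K : Submodule 𝕜 E)
    [K.HasOrthogonalProjection] : IsIdempotentElem (K.starProjection : E →ₗ[𝕜] E) :=
  ContinuousLinearMap.IsIdempotentElem.toLinearMap K.isIdempotentElem_starProjection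

theorem IsLowerSet.eq_setOf_val_lt_ncard {n : ℕ} {s : Set (Fin n)} (hs : IsLowerSet s) :
    s = {j : Fin n | (j : ℕ) < s.ncard} := by
  rcases hs.eq_univ_or_Iio with rfl | ⟨a, rfl⟩
  · ext j
    simp [Set.ncard_univ]
  · ext j
    rw [← Finset.coe_Iio, Set.ncard_coe_finset, Fin.card_Iio]
    simp

theorem LinearIndependent.finrank_span_image {ι R V : Type*} [Fintype ι] [Ring R] [Nontrivial R]
    [StrongRankCondition R] [AddCommGroup V] [Module R V] {v : ι → V}
    (hv : LinearIndependent R v) (s : Set ι) :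
    Module.finrank R (Submodule.span R (v '' s)) = s.ncard := by
  classical
  rw [Set.image_eq_range,
    finrank_span_eq_card (b := fun j : s => v j) (hv.comp _ Subtype.val_injective),
    ← Nat.card_eq_fintype_card, Nat.card_coe_set_eq]

theorem LinearIndependent.subset_of_span_image_le {ι R V : Type*} [Ring R] [Nontrivial R]
    [AddCommGroup V] [Module R V] {v : ι → V} (hv : LinearIndependent R v) {s t : Set ι}
    (hst : Submodule.span R (v '' s) ≤ Submodule.span R (v '' t)) : s ⊆ t := fun i hi => by
  by_contra hit
  exact hv.notMem_span_image hit (hst (Submodule.subset_span (Set.mem_image_of_mem v hi)))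

theorem Submodule.biSup_span_singleton {ι R V : Type*} [Semiring R] [AddCommMonoid V]
    [Module R V] (v : ι → V) (s : Set ι) :
    ⨆ i ∈ s, Submodule.span R {v i} = Submodule.span R (v '' s) := by
  rw [Set.image_eq_iUnion, Submodule.span_iUnion₂]

section Eigenbasis

variable {ι E : Type*} [Fintype ι] [NormedAddCommGroup E] [InnerProductSpace ℝ E]
  {b : OrthonormalBasis ι ℝ E} {S T : E →ₗ[ℝ] E} {ev : ι → ℝ}

theorem OrthonormalBasis.eq_inner_smul_of_apply_eq_smul (hT : T.IsSymmetric)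
    (hev : Function.Injective ev) (heig : ∀ i, T (b i) = ev i • b i) {k : ι} {w : E}
    (hw : T w = ev k • w) : w = inner ℝ (b k) w • b k := by
  have hcoeff : ∀ j ≠ k, inner ℝ (b j) w = (0 : ℝ) := by
    intro j hjk
    have hmul : (ev j - ev k) * inner ℝ (b j) w = 0 := by
      rw [sub_mul, ← real_inner_smul_left, ← heig, hT, hw, real_inner_smul_right, sub_self]
    exact (mul_eq_zero.mp hmul).resolve_left (sub_ne_zero.mpr (hev.ne hjk))
  conv_lhs => rw [← b.sum_repr' w]
  exact Finset.sum_eq_single k (fun j _ hjk => by rw [hcoeff j hjk, zero_smul])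
    (fun hk => absurd (Finset.mem_univ k) hk)

theorem OrthonormalBasis.mem_orthogonal_span_image {s : Set ι} {i : ι} (hi : i ∉ s) :
    b i ∈ (Submodule.span ℝ (b '' s))ᗮ := by
  have hortho : Submodule.span ℝ {b i} ⟂ Submodule.span ℝ (b '' s) := by
    rw [Submodule.isOrtho_span]
    rintro _ rfl _ ⟨j, hj, rfl⟩
    exact b.orthonormal.2 (ne_of_mem_of_not_mem hj hi).symm
  exact hortho.le (Submodule.mem_span_singleton_self _)

theorem OrthonormalBasis.commute_starProjection_span_image [FiniteDimensional ℝ E]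
    (heig : ∀ i, T (b i) = ev i • b i) (s : Set ι) :
    Commute ((Submodule.span ℝ (b '' s)).starProjection : E →ₗ[ℝ] E) T := by
  refine (b.toBasis.ext fun i => ?_ : _ * T = T * _)
  rw [b.coe_toBasis, Module.End.mul_apply, Module.End.mul_apply, heig, map_smul,
    ContinuousLinearMap.coe_coe]
  by_cases hi : i ∈ s
  · rw [Submodule.starProjection_eq_self_iff.mpr
      (Submodule.subset_span (Set.mem_image_of_mem b hi)), heig]
  · rw [(Submodule.starProjection_apply_eq_zero_iff _).mpr (b.mem_orthogonal_span_image hi),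
      map_zero, smul_zero]

theorem OrthonormalBasis.mem_or_mem_orthogonal_of_commute [FiniteDimensional ℝ E]
    (hT : T.IsSymmetric) (hev : Function.Injective ev) (heig : ∀ i, T (b i) = ev i • b i)
    {K : Submodule ℝ E} (hK : Commute (K.starProjection : E →ₗ[ℝ] E) T) (k : ι) :
    b k ∈ K ∨ b k ∈ Kᗮ := by
  set P : E →ₗ[ℝ] E := (K.starProjection : E →ₗ[ℝ] E)
  set c : ℝ := inner ℝ (b k) (P (b k))
  have hPb : P (b k) = c • b k := by
    refine b.eq_inner_smul_of_apply_eq_smul hT hev heig ?_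
    rw [← Module.End.mul_apply, ← hK.eq, Module.End.mul_apply, heig, map_smul]
  have hc : IsIdempotentElem c := by
    refine smul_left_injective ℝ (b.orthonormal.ne_zero k) ?_
    have hPP := congrArg (· (b k)) K.isIdempotentElem_starProjection_toLinearMap.eq
    simp only [Module.End.mul_apply] at hPP
    rwa [hPb, map_smul, hPb, smul_smul] at hPP
  rcases IsIdempotentElem.iff_eq_zero_or_one.mp hc with hc0 | hc1
  · right
    rw [← Submodule.starProjection_apply_eq_zero_iff]
    exact (hPb.trans (by rw [hc0, zero_smul]) : P (b k) = 0)
  · left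
    rw [← Submodule.starProjection_eq_self_iff]
    exact (hPb.trans (by rw [hc1, one_smul]) : P (b k) = b k)

theorem LinearMap.IsSymmetric.range_le_span_image (hS : S.IsSymmetric)
    (b : OrthonormalBasis ι ℝ E) :
    LinearMap.range S ≤ Submodule.span ℝ (b '' {i | S (b i) ≠ 0}) := by
  rintro _ ⟨x, rfl⟩
  rw [← b.sum_repr' (S x)]
  refine Submodule.sum_mem _ fun i _ => ?_
  by_cases hi : S (b i) = 0
  · rw [← hS, hi, inner_zero_left, zero_smul]
    exact Submodule.zero_mem _
  · exact Submodule.smul_mem _ _ (Submodule.subset_span (Set.mem_image_of_mem b hi))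

theorem LinearMap.IsSymmetric.span_image_le_of_commute [FiniteDimensional ℝ E]
    (hS : S.IsSymmetric) (hT : T.IsSymmetric) (hev : Function.Injective ev)
    (heig : ∀ i, T (b i) = ev i • b i) {K : Submodule ℝ E}
    (hK : Commute (K.starProjection : E →ₗ[ℝ] E) T) (hSK : LinearMap.range S ≤ K) :
    Submodule.span ℝ (b '' {i | S (b i) ≠ 0}) ≤ K := by
  rw [Submodule.span_le]
  rintro _ ⟨i, hi, rfl⟩
  refine (b.mem_or_mem_orthogonal_of_commute hT hev heig hK i).resolve_right fun horth => hi ?_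
  -- `‖S (b i)‖² = ⟪b i, S (S (b i))⟫` vanishes, since `S (S (b i)) ∈ K` and `b i ∈ Kᗮ`
  have hSSb : S (S (b i)) ∈ K := hSK (LinearMap.mem_range_self S _)
  rw [← inner_self_eq_zero (𝕜 := ℝ), ← hS]
  exact Submodule.inner_right_of_mem_orthogonal hSSb horth

end Eigenbasis

section Matrix

variable {p : ℕ} {M B : Matrix (Fin p) (Fin p) ℝ}

theorem Matrix.IsSymm.isSymmetric_toEuclideanLin (hM : M.IsSymm) :
    (Matrix.toEuclideanLin M).IsSymmetric :=
  Matrix.isSymmetric_toEuclideanLin_iff.mpr (Matrix.isHermitian_iff_isSymm.mpr hM)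

theorem Matrix.PosSemidef.inner_toEuclideanLin_self_nonneg (hB : B.PosSemidef)
    (x : EuclideanSpace ℝ (Fin p)) : 0 ≤ (inner ℝ x (Matrix.toEuclideanLin B x) : ℝ) :=
  (Matrix.isPositive_toEuclideanLin_iff.mpr hB).inner_nonneg_right x

theorem Matrix.PosSemidef.inner_toEuclideanLin_self_pos_iff (hB : B.PosSemidef)
    (x : EuclideanSpace ℝ (Fin p)) :
    0 < (inner ℝ x (Matrix.toEuclideanLin B x) : ℝ) ↔ Matrix.toEuclideanLin B x ≠ 0 := by
  rw [(hB.inner_toEuclideanLin_self_nonneg x).lt_iff_ne', not_iff_not, ← WithLp.ofLp_eq_zero,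
    Matrix.ofLp_toLpLin, EuclideanSpace.inner_eq_star_dotProduct, Matrix.ofLp_toLpLin,
    dotProduct_comm]
  exact hB.dotProduct_mulVec_zero_iff _

theorem isReducingSubspace_iff_commute {R : Submodule ℝ (EuclideanSpace ℝ (Fin p))} :
    IsReducingSubspace M R ↔
      Commute (R.starProjection : EuclideanSpace ℝ (Fin p) →ₗ[ℝ] _) (Matrix.toEuclideanLin M) :=
  R.isIdempotentElem_starProjection_toLinearMap.eq_mul_mul_add_mul_mul_iff_commute

theorem envelopeM_eq_span_image (hM : M.IsSymm) (hB : B.IsSymm)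
    {v : Fin p → EuclideanSpace ℝ (Fin p)} (hv : Orthonormal ℝ v) {ev : Fin p → ℝ}
    (hev : Function.Injective ev)
    (heig : ∀ i, Matrix.toEuclideanLin M (v i) = ev i • v i) :
    envelopeM M B = Submodule.span ℝ (v '' {i | Matrix.toEuclideanLin B (v i) ≠ 0}) := by
  let b := OrthonormalBasis.mk hv
    (hv.linearIndependent.span_eq_top_of_card_eq_finrank' (by simp)).ge
  have hb : ⇑b = v := OrthonormalBasis.coe_mk _ _
  rw [← hb] at heig ⊢
  refine le_antisymm (sInf_le ⟨?_, hB.isSymmetric_toEuclideanLin.range_le_span_image b⟩) ?_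
  · exact isReducingSubspace_iff_commute.mpr (b.commute_starProjection_span_image heig _)
  · exact le_sInf fun R ⟨hR, hBR⟩ => hB.isSymmetric_toEuclideanLin.span_image_le_of_commute
      hM.isSymmetric_toEuclideanLin hev heig (isReducingSubspace_iff_commute.mp hR) hBR

end Matrix

theorem envelope_eq_span_of_top_score_eigvecs_general
    (p d : ℕ) (hd : d ≤ p)
    (M B : Matrix (Fin p) (Fin p) ℝ)
    (hMsymm : M.IsSymm)
    (hBsymm : B.IsSymm) (hB : B.PosSemidef)
    (ev : Fin p → ℝ) (hev : StrictAnti ev)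
    (v : Fin p → EuclideanSpace ℝ (Fin p))
    (hv : Orthonormal ℝ v)
    (heig : ∀ i, Matrix.toEuclideanLin M (v i) = ev i • v i)
    (henv : envelopeM M B ≤ ⨆ i ∈ {i : Fin p | (i : ℕ) < d}, Submodule.span ℝ {v i})
    -- the envelope scores of the first `d` eigenvectors
    (φ : Fin d → ℝ)
    (hφ : ∀ j : Fin d,
      φ j = (inner ℝ (v (Fin.castLE hd j)) (Matrix.toEuclideanLin B (v (Fin.castLE hd j))) : ℝ))
    -- a permutation sorting the scores in descending order: φ_(1) ≥ … ≥ φ_(d)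
    (π : Equiv.Perm (Fin d)) (hsort : Antitone (fun j : Fin d => φ (π j)))
    -- the envelope dimension
    (ustar : ℕ) (hustar : ustar = Module.finrank ℝ (envelopeM M B)) :
    envelopeM M B =
      (⨆ j ∈ {j : Fin d | (j : ℕ) < ustar}, Submodule.span ℝ {v (Fin.castLE hd (π j))}) ∧
    (∀ j : Fin d, (j : ℕ) < ustar → 0 < φ (π j)) ∧
    (∀ j : Fin d, ustar ≤ (j : ℕ) → φ (π j) = 0) := by
  let f : Fin d → Fin p := Fin.castLE hd ∘ π
  let S : Set (Fin p) := {i | Matrix.toEuclideanLin B (v i) ≠ 0}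
  let A : Set (Fin d) := {j | 0 < φ (π j)}
  have hES : envelopeM M B = Submodule.span ℝ (v '' S) :=
    envelopeM_eq_span_image hMsymm hBsymm hv hev.injective heig
  have hSf : S ⊆ Set.range f := by
    rw [EquivLike.range_comp, Fin.range_castLE]
    refine hv.linearIndependent.subset_of_span_image_le ?_
    rwa [← hES, ← Submodule.biSup_span_singleton]
  have hAS : f ⁻¹' S = A :=
    Set.ext fun j => by simp only [Set.mem_preimage, Set.mem_ofPred_eq, hφ, f, S, A,
      Function.comp_apply, hB.inner_toEuclideanLin_self_pos_iff]
  have hEA : envelopeM M B = Submodule.span ℝ ((v ∘ f) '' A) := by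
    rw [hES, Set.image_comp, ← hAS, Set.image_preimage_eq_of_subset hSf]
  have hcard : A.ncard = ustar := by
    rw [hustar, hEA, (hv.linearIndependent.comp f
      ((Fin.castLE_injective hd).comp π.injective)).finrank_span_image]
  have hA : A = {j : Fin d | (j : ℕ) < ustar} := hcard ▸
    (isLowerSet_setOfPred.mpr fun j k hjk hk => hk.trans_le (hsort hjk)).eq_setOf_val_lt_ncard
  have hnonneg : ∀ j, 0 ≤ φ j := fun j => hφ j ▸ hB.inner_toEuclideanLin_self_nonneg _
  refine ⟨by rw [hEA, hA, Submodule.biSup_span_singleton]; rfl, fun j hj => (hA ▸ hj : j ∈ A),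
    fun j hj => le_antisymm ?_ (hnonneg _)⟩
  exact not_lt.mp fun hpos => (hA ▸ hpos : j ∈ {j : Fin d | (j : ℕ) < ustar}).not_ge hj

theorem envelope_eq_span_of_top_score_eigvecs
    (p d : ℕ) (hd : d ≤ p)
    (M B : Matrix (Fin p) (Fin p) ℝ)
    (hMsymm : M.IsSymm) (hM : M.PosDef)
    (hBsymm : B.IsSymm) (hB : B.PosSemidef)
    (ev : Fin p → ℝ) (hev : StrictAnti ev)
    (v : Fin p → EuclideanSpace ℝ (Fin p))
    (hv : Orthonormal ℝ v)
    (heig : ∀ i, Matrix.toEuclideanLin M (v i) = ev i • v i)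
    (henv : envelopeM M B ≤ ⨆ i ∈ {i : Fin p | (i : ℕ) < d}, Submodule.span ℝ {v i})
    -- the envelope scores of the first `d` eigenvectors
    (φ : Fin d → ℝ)
    (hφ : ∀ j : Fin d,
      φ j = (inner ℝ (v (Fin.castLE hd j)) (Matrix.toEuclideanLin B (v (Fin.castLE hd j))) : ℝ))
    -- a permutation sorting the scores in descending order: φ_(1) ≥ … ≥ φ_(d)
    (π : Equiv.Perm (Fin d)) (hsort : Antitone (fun j : Fin d => φ (π j)))
    -- the envelope dimension
    (ustar : ℕ) (hustar : ustar = Module.finrank ℝ (envelopeM M B)) :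
    envelopeM M B =
      (⨆ j ∈ {j : Fin d | (j : ℕ) < ustar}, Submodule.span ℝ {v (Fin.castLE hd (π j))}) ∧
    (∀ j : Fin d, (j : ℕ) < ustar → 0 < φ (π j)) ∧
    (∀ j : Fin d, ustar ≤ (j : ℕ) → φ (π j) = 0) :=
  envelope_eq_span_of_top_score_eigvecs_general p d hd M B hMsymm hBsymm hB ev hev v hv heig henv φ
    hφ π hsort ustar hustar
end

section
/- For every u with 1 ≤ u ≤ r there exist d with u ≤ d ≤ r and λ > 0 such that R_E(d, λ) < R_N(u, d). -/
open Matrix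
open scoped Kronecker

/-- The vectorization `vec(β)` of a `p × q` matrix, indexed to match `I_q ⊗ A`
(the index `(k, i)` with `k ∈ Fin q`, `i ∈ Fin p` corresponds to entry `β i k`). -/
def vecM {p q : ℕ} (β : Matrix (Fin p) (Fin q) ℝ) : Fin q × Fin p → ℝ :=
  fun ki => β ki.2 ki.1

/-- EgReg reducible prediction risk
`R_E(d, λ) = tr(Σ_ε)·tr(V_d D_d⁻² Φ_d² (Φ_d + λ I_d)⁻² V_d' Σ_x)
  + λ²·vec(β*)'(I_q ⊗ V_d (Φ_d + λ I_d)⁻¹ V_d' Σ_x V_d (Φ_d + λ I_d)⁻¹ V_d') vec(β*)`. -/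
noncomputable def RE {p q d : ℕ}
    (Vd : Matrix (Fin p) (Fin d) ℝ) (Dd Φd : Matrix (Fin d) (Fin d) ℝ)
    (Sx : Matrix (Fin p) (Fin p) ℝ) (Se : Matrix (Fin q) (Fin q) ℝ)
    (β : Matrix (Fin p) (Fin q) ℝ) (lam : ℝ) : ℝ :=
  Se.trace * (Vd * (Dd ^ 2)⁻¹ * Φd ^ 2 * ((Φd + lam • 1) ^ 2)⁻¹ * Vdᵀ * Sx).trace
  + lam ^ 2 * vecM β ⬝ᵥ (((1 : Matrix (Fin q) (Fin q) ℝ) ⊗ₖ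
      (Vd * (Φd + lam • 1)⁻¹ * Vdᵀ * Sx * Vd * (Φd + lam • 1)⁻¹ * Vdᵀ)).mulVec (vecM β))

/-- NIECE reducible prediction risk
`R_N(u, d) = tr(Σ_ε)·tr(V_u D_u⁻² V_u' Σ_x)
  + vec(β*)'(I_q ⊗ (V_u V_u' − V_d V_d') Σ_x (V_u V_u' − V_d V_d')) vec(β*)`. -/
noncomputable def RN {p q u d : ℕ}
    (Vu : Matrix (Fin p) (Fin u) ℝ) (Du : Matrix (Fin u) (Fin u) ℝ)
    (Vd : Matrix (Fin p) (Fin d) ℝ)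
    (Sx : Matrix (Fin p) (Fin p) ℝ) (Se : Matrix (Fin q) (Fin q) ℝ)
    (β : Matrix (Fin p) (Fin q) ℝ) : ℝ :=
  Se.trace * (Vu * (Du ^ 2)⁻¹ * Vuᵀ * Sx).trace
  + vecM β ⬝ᵥ (((1 : Matrix (Fin q) (Fin q) ℝ) ⊗ₖ
      ((Vu * Vuᵀ - Vd * Vdᵀ) * Sx * (Vu * Vuᵀ - Vd * Vdᵀ))).mulVec (vecM β))

/-- The largest eigenvalue of a square matrix. -/
noncomputable def maxEig {m : ℕ} (A : Matrix (Fin m) (Fin m) ℝ) : ℝ :=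
  sSup {t : ℝ | ∃ w : Fin m → ℝ, w ≠ 0 ∧ A.mulVec w = t • w}

/-!
Take `d = u`. Then the bias term of `R_N(u, u)` vanishes, and with `a_i = σ_(i)⁻² (V_u' Σ_x V_u)_ii > 0`
the difference `R_E(u, λ) - R_N(u, u)` is `tr(Σ_ε) ∑ a_i ((φ_i / (φ_i + λ))² - 1) + λ² Q(λ)`, where the
EgReg bias `λ² Q(λ)` has `Q` continuous at `λ = 0`. Since `(φ / (φ + λ))² - 1 = -λ (2φ + λ) / (φ + λ)²`,
the difference is `λ h(λ)` with `h` continuous at `0` and `h(0) = -2 tr(Σ_ε) ∑ a_i / φ_i < 0`;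
so every sufficiently small `λ > 0` makes EgReg strictly better.
-/
open Filter Topology

namespace Matrix

theorem inv_diagonal_of_ne_zero {n K : Type*} [Fintype n] [DecidableEq n] [Field K]
    {v : n → K} (hv : ∀ i, v i ≠ 0) : (diagonal v)⁻¹ = diagonal v⁻¹ :=
  inv_eq_right_inv <| by
    rw [diagonal_mul_diagonal, ← diagonal_one]
    exact congrArg diagonal (funext fun i => mul_inv_cancel₀ (hv i))

theorem trace_mul_diagonal_mul_transpose_mul {m n K : Type*} [Fintype m] [Fintype n]
    [DecidableEq n] [CommRing K] (A : Matrix m n K) (a : n → K) (S : Matrix m m K) :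
    (A * diagonal a * Aᵀ * S).trace = ∑ i, a i * (Aᵀ * S * A) i i := by
  rw [trace_mul_cycle, trace_mul_cycle, ← Matrix.mul_assoc (Aᵀ * S) A, trace_mul_comm]
  simp [trace, diag, diagonal_mul]

theorem transpose_mul_self_submatrix_eq_one {m n r K : Type*} [Fintype m] [DecidableEq n]
    [DecidableEq r] [CommSemiring K] {V : Matrix m r K} (hV : Vᵀ * V = 1) {e : n → r}
    (he : Function.Injective e) : (V.submatrix id e)ᵀ * V.submatrix id e = 1 := by
  rw [transpose_submatrix, ← submatrix_mul _ _ _ _ _ Function.bijective_id, hV,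
    submatrix_one _ he]

theorem PosDef.transpose_mul_mul_of_transpose_mul_self_eq_one {m n : Type*} [Fintype m]
    [Fintype n] [DecidableEq n] {S : Matrix m m ℝ} (hS : S.PosDef) {W : Matrix m n ℝ}
    (hW : Wᵀ * W = 1) : (Wᵀ * S * W).PosDef := by
  have hinj : Function.Injective W.mulVec := fun x y hxy => by
    simpa [mulVec_mulVec, hW] using congrArg (Wᵀ *ᵥ ·) hxy
  simpa using hS.conjTranspose_mul_mul_same hinj

end Matrix

theorem vecM_dotProduct_one_kronecker_mulVec {p q : ℕ} (β : Matrix (Fin p) (Fin q) ℝ)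
    (M : Matrix (Fin p) (Fin p) ℝ) :
    vecM β ⬝ᵥ ((1 ⊗ₖ M) *ᵥ vecM β) = (βᵀ * M * β).trace := by
  rw [show vecM β = β.vec from rfl, ← vec_mul_eq_mulVec, vec_dotProduct_vec, Matrix.mul_assoc]

section DiagonalScores

variable {p q d : ℕ} (W : Matrix (Fin p) (Fin d) ℝ) (s φ : Fin d → ℝ)
  (Sx : Matrix (Fin p) (Fin p) ℝ) (Se : Matrix (Fin q) (Fin q) ℝ) (β : Matrix (Fin p) (Fin q) ℝ)

theorem RN_diagonal_self (hs : ∀ i, s i ≠ 0) :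
    RN W (diagonal s) W Sx Se β = Se.trace * ∑ i, (s i ^ 2)⁻¹ * (Wᵀ * Sx * W) i i := by
  rw [RN, diagonal_pow, inv_diagonal_of_ne_zero (v := s ^ 2) fun i => pow_ne_zero 2 (hs i),
    trace_mul_diagonal_mul_transpose_mul, sub_self, zero_mul, mul_zero, kronecker_zero,
    zero_mulVec, dotProduct_zero, add_zero]
  rfl

theorem RE_diagonal {lam : ℝ} (hs : ∀ i, s i ≠ 0) (hφ : ∀ i, φ i + lam ≠ 0) :
    RE W (diagonal s) (diagonal φ) Sx Se β lam =
      Se.trace * ∑ i, (φ i / (φ i + lam)) ^ 2 * ((s i ^ 2)⁻¹ * (Wᵀ * Sx * W) i i)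
      + lam ^ 2 * (βᵀ * (W * diagonal (fun i => (φ i + lam)⁻¹) * Wᵀ * Sx * W
          * diagonal (fun i => (φ i + lam)⁻¹) * Wᵀ) * β).trace := by
  have hshift : diagonal φ + lam • 1 = diagonal (fun i => φ i + lam) := by
    rw [smul_one_eq_diagonal, diagonal_add]
  rw [RE, vecM_dotProduct_one_kronecker_mulVec, hshift, diagonal_pow, diagonal_pow, diagonal_pow,
    inv_diagonal_of_ne_zero (v := s ^ 2) fun i => pow_ne_zero 2 (hs i),
    inv_diagonal_of_ne_zero (v := (fun i => φ i + lam) ^ 2) fun i => pow_ne_zero 2 (hφ i),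
    inv_diagonal_of_ne_zero hφ, Matrix.mul_assoc W, diagonal_mul_diagonal, Matrix.mul_assoc W,
    diagonal_mul_diagonal, trace_mul_diagonal_mul_transpose_mul]
  congr 2
  refine Finset.sum_congr rfl fun i _ => ?_
  simp only [Pi.inv_apply, Pi.pow_apply, div_pow]
  ring

theorem exists_RE_lt_RN_self (hd : 0 < d) (hs : ∀ i, s i ≠ 0) (hφ : ∀ i, 0 < φ i)
    (hN : ∀ i, 0 < (Wᵀ * Sx * W) i i) (hSe : 0 < Se.trace) :
    ∃ lam, 0 < lam ∧ RE W (diagonal s) (diagonal φ) Sx Se β lam < RN W (diagonal s) W Sx Se β := by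
  set a : Fin d → ℝ := fun i => (s i ^ 2)⁻¹ * (Wᵀ * Sx * W) i i
  set Q : (Fin d → ℝ) → ℝ := fun g =>
    (βᵀ * (W * diagonal g * Wᵀ * Sx * W * diagonal g * Wᵀ) * β).trace
  set slope : ℝ → ℝ := fun lam => Se.trace * ∑ i, a i * ((2 * φ i + lam) / (φ i + lam) ^ 2)
  set h : ℝ → ℝ := fun lam => lam * Q (fun i => (φ i + lam)⁻¹) - slope lam
  have hdiff : ∀ lam > 0, RE W (diagonal s) (diagonal φ) Sx Se β lam
      - RN W (diagonal s) W Sx Se β = lam * h lam := by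
    intro lam hlam
    have hφlam : ∀ i, φ i + lam ≠ 0 := fun i => (add_pos (hφ i) hlam).ne'
    have hterm : ∀ i, (φ i / (φ i + lam)) ^ 2 * a i - a i
        = -(lam * (a i * ((2 * φ i + lam) / (φ i + lam) ^ 2))) := fun i => by
      field_simp [hφlam i]
      ring
    rw [RE_diagonal W s φ Sx Se β hs hφlam, RN_diagonal_self W s Sx Se β hs]
    calc _ = Se.trace * ∑ i, ((φ i / (φ i + lam)) ^ 2 * a i - a i)
          + lam ^ 2 * Q (fun i => (φ i + lam)⁻¹) := by
          rw [Finset.sum_sub_distrib]; ring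
      _ = lam * h lam := by
          simp only [hterm, Finset.sum_neg_distrib, ← Finset.mul_sum, h, slope]; ring
  have hcont : ContinuousAt h 0 := by
    have hφ0 : ∀ i, φ i + 0 ≠ 0 := fun i => by simpa using (hφ i).ne'
    have hQ : Continuous Q := by fun_prop
    have hshift : ContinuousAt (fun lam : ℝ => fun i => (φ i + lam)⁻¹) 0 :=
      continuousAt_pi.2 fun i => (continuousAt_const.add continuousAt_id).inv₀ (hφ0 i)
    have hslope : ContinuousAt slope 0 := continuousAt_const.mul <|
      tendsto_finsetSum _ fun i _ =>
        show ContinuousAt _ 0 by fun_prop (disch := exact pow_ne_zero 2 (hφ0 i))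
    exact (continuousAt_id.mul (hQ.continuousAt.comp hshift)).sub hslope
  have h0 : h 0 < 0 := by
    have : 0 < slope 0 := mul_pos hSe <| Finset.sum_pos (fun i _ => by
      have := hφ i; have := hN i; have := hs i; positivity) ⟨⟨0, hd⟩, Finset.mem_univ _⟩
    simpa [h] using this
  have hev : ∀ᶠ lam in 𝓝[>] 0, h lam < 0 ∧ 0 < lam :=
    ((hcont.eventually (gt_mem_nhds h0)).filter_mono nhdsWithin_le_nhds).and
      self_mem_nhdsWithin
  obtain ⟨lam, hlam_neg, hlam_pos⟩ := hev.exists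
  exact ⟨lam, hlam_pos, sub_neg.1 (hdiff lam hlam_pos ▸ mul_neg_of_pos_of_neg hlam_pos hlam_neg)⟩

end DiagonalScores

theorem egreg_beats_niece_reducible_risk_general
    (p q r : ℕ)
    (V : Matrix (Fin p) (Fin r) ℝ) (σ : Fin r → ℝ)
    (hV : Vᵀ * V = 1)
    (hσpos : ∀ j, 0 < σ j)
    -- a permutation of the singular triples and envelope scores φ_(1) ≥ … ≥ φ_(r) > 0
    -- attached to the correspondingly permuted triples
    (π : Equiv.Perm (Fin r)) (φ : Fin r → ℝ)
    (hφpos : ∀ j, 0 < φ j)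
    (Sx : Matrix (Fin p) (Fin p) ℝ) (hSx : Sx.PosDef)
    (Se : Matrix (Fin q) (Fin q) ℝ) (hSetr : 0 < Se.trace)
    (β : Matrix (Fin p) (Fin q) ℝ) :
    ∀ u : ℕ, 1 ≤ u → ∀ hu : u ≤ r,
      ∃ (d : ℕ) (_ : u ≤ d) (hdr : d ≤ r) (lam : ℝ), 0 < lam ∧
        RE (V.submatrix id (fun j : Fin d => π (Fin.castLE hdr j)))
           (Matrix.diagonal (fun j : Fin d => σ (π (Fin.castLE hdr j))))
           (Matrix.diagonal (fun j : Fin d => φ (Fin.castLE hdr j)))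
           Sx Se β lam
        < RN (V.submatrix id (fun j : Fin u => π (Fin.castLE hu j)))
             (Matrix.diagonal (fun j : Fin u => σ (π (Fin.castLE hu j))))
             (V.submatrix id (fun j : Fin d => π (Fin.castLE hdr j)))
             Sx Se β := by
  intro u hu_pos hu
  have he : Function.Injective fun j : Fin u => π (Fin.castLE hu j) :=
    π.injective.comp (Fin.castLE_injective hu)
  have hN := hSx.transpose_mul_mul_of_transpose_mul_self_eq_one
    (transpose_mul_self_submatrix_eq_one hV he)
  exact ⟨u, le_rfl, hu, exists_RE_lt_RN_self _ _ _ Sx Se β hu_pos (fun _ => (hσpos _).ne')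
    (fun _ => hφpos _) (fun _ => hN.diag_pos) hSetr⟩

theorem egreg_beats_niece_reducible_risk
    (n p q r : ℕ) (hr : 0 < r)
    (X : Matrix (Fin n) (Fin p) ℝ)
    (U : Matrix (Fin n) (Fin r) ℝ) (V : Matrix (Fin p) (Fin r) ℝ) (σ : Fin r → ℝ)
    (hrank : X.rank = r)
    (hSVD : X = U * Matrix.diagonal σ * Vᵀ)
    (hU : Uᵀ * U = 1) (hV : Vᵀ * V = 1)
    (hσpos : ∀ j, 0 < σ j) (hσanti : Antitone σ)
    -- a permutation of the singular triples and envelope scores φ_(1) ≥ … ≥ φ_(r) > 0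
    -- attached to the correspondingly permuted triples
    (π : Equiv.Perm (Fin r)) (φ : Fin r → ℝ)
    (hφpos : ∀ j, 0 < φ j) (hφanti : Antitone φ)
    (Sx : Matrix (Fin p) (Fin p) ℝ) (hSx : Sx.PosDef) (hSxsymm : Sx.IsSymm)
    (Se : Matrix (Fin q) (Fin q) ℝ) (hSe : Se.PosSemidef) (hSetr : 0 < Se.trace)
    (β : Matrix (Fin p) (Fin q) ℝ) :
    ∀ u : ℕ, 1 ≤ u → ∀ hu : u ≤ r,
      ∃ (d : ℕ) (_ : u ≤ d) (hdr : d ≤ r) (lam : ℝ), 0 < lam ∧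
        RE (V.submatrix id (fun j : Fin d => π (Fin.castLE hdr j)))
           (Matrix.diagonal (fun j : Fin d => σ (π (Fin.castLE hdr j))))
           (Matrix.diagonal (fun j : Fin d => φ (Fin.castLE hdr j)))
           Sx Se β lam
        < RN (V.submatrix id (fun j : Fin u => π (Fin.castLE hu j)))
             (Matrix.diagonal (fun j : Fin u => σ (π (Fin.castLE hu j))))
             (V.submatrix id (fun j : Fin d => π (Fin.castLE hdr j)))
             Sx Se β :=
  egreg_beats_niece_reducible_risk_general p q r V σ hV hσpos π φ hφpos Sx hSx Se hSetr β
end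

section
/- For every λ > 0, the mean of the population EgReg estimator, β̄ = Γ (Γ' X' X Γ + nλ I_u)^{-1} Γ' X' X β*, satisfies the bias identity tr( (β̄ − β*)' Σ_x (β̄ − β*) ) = λ² · tr( Γ' β* β*' Γ (S + λ I_u)^{-2} ). -/
open Matrix

theorem population_egreg_bias_identity
    (n p u q : ℕ) (hn : 0 < n) (hp : 0 < p) (hu : 0 < u) (hq : 0 < q)
    (Γ : Matrix (Fin p) (Fin u) ℝ) (hΓ : Γᵀ * Γ = 1)
    (Sx : Matrix (Fin p) (Fin p) ℝ) (hSx : Sx.IsSymm) (hSxΓ : Sx * Γ = Γ)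
    (β : Matrix (Fin p) (Fin q) ℝ) (hβ : β = Γ * Γᵀ * β)
    (X : Matrix (Fin n) (Fin p) ℝ)
    (S : Matrix (Fin u) (Fin u) ℝ) (hS : S = ((n : ℝ)⁻¹) • (Γᵀ * Xᵀ * X * Γ))
    (lam : ℝ) (hlam : 0 < lam)
    (βbar : Matrix (Fin p) (Fin q) ℝ)
    (hβbar : βbar = Γ * (Γᵀ * Xᵀ * X * Γ + ((n : ℝ) * lam) • 1)⁻¹ * Γᵀ * Xᵀ * X * β) :
    ((βbar - β)ᵀ * Sx * (βbar - β)).trace =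
      lam ^ 2 * (Γᵀ * β * βᵀ * Γ * ((S + lam • 1) ^ 2)⁻¹).trace := by
  have hnR : (0:ℝ) < (n:ℝ) := by exact_mod_cast hn
  set B : Matrix (Fin u) (Fin u) ℝ := Γᵀ * Xᵀ * X * Γ with hB
  set M : Matrix (Fin u) (Fin u) ℝ := B + ((n : ℝ) * lam) • 1 with hM
  set c : ℝ := (n : ℝ) * lam with hc
  set v : Matrix (Fin u) (Fin q) ℝ := Γᵀ * β with hv
  -- B is positive semidefinite
  have hBps : B.PosSemidef := by
    have h := Matrix.posSemidef_conjTranspose_mul_self (X * Γ)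
    have hEq : (X * Γ)ᴴ * (X * Γ) = B := by
      rw [Matrix.conjTranspose_eq_transpose_of_trivial, hB]
      rw [Matrix.transpose_mul]
      simp only [Matrix.mul_assoc]
    rwa [hEq] at h
  -- M is positive definite
  have hMpd : M.PosDef := by
    have h1 : (c • (1 : Matrix (Fin u) (Fin u) ℝ)).PosDef := by
      rw [Matrix.smul_one_eq_diagonal]
      exact Matrix.posDef_diagonal_iff.mpr fun i => by positivity
    exact Matrix.PosDef.posSemidef_add hBps h1
  have hMdet : IsUnit M.det := hMpd.det_pos.ne'.isUnit
  have hMinv : M * M⁻¹ = 1 := Matrix.mul_nonsing_inv M hMdet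
  have hinvM : M⁻¹ * M = 1 := Matrix.nonsing_inv_mul M hMdet
  -- symmetry of B and M
  have hBsym : Bᵀ = B := by
    rw [hB]
    simp only [Matrix.transpose_mul, Matrix.transpose_transpose, Matrix.mul_assoc]
  have hMsym : Mᵀ = M := by
    rw [hM, Matrix.transpose_add, hBsym, Matrix.transpose_smul, Matrix.transpose_one]
  have hMinvsym : (M⁻¹)ᵀ = M⁻¹ := by
    rw [Matrix.transpose_nonsing_inv, hMsym]
  -- rewrite βbar and β
  have hβbar' : βbar = Γ * (M⁻¹ * (B * v)) := by
    rw [hβbar]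
    conv_lhs => rw [hβ]
    simp only [hB, hv, Matrix.mul_assoc]
  have hβ' : β = Γ * (M⁻¹ * (M * v)) := by
    rw [← Matrix.mul_assoc M⁻¹ M, hinvM, Matrix.one_mul, hv, ← Matrix.mul_assoc]
    exact hβ
  have key : B * v - M * v = (-c) • v := by
    rw [hM, Matrix.add_mul, Matrix.smul_mul, Matrix.one_mul, neg_smul]
    abel
  have hD : βbar - β = (-c) • (Γ * (M⁻¹ * v)) := by
    calc βbar - β = Γ * (M⁻¹ * (B * v)) - Γ * (M⁻¹ * (M * v)) := by rw [hβbar', ← hβ']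
      _ = Γ * (M⁻¹ * (B * v - M * v)) := by rw [← Matrix.mul_sub, ← Matrix.mul_sub]
      _ = (-c) • (Γ * (M⁻¹ * v)) := by rw [key, Matrix.mul_smul, Matrix.mul_smul]
  -- Γᵀ * Sx = Γᵀ
  have hΓSx : Γᵀ * Sx = Γᵀ := by
    have h2 : (Sx * Γ)ᵀ = Γᵀ := by rw [hSxΓ]
    rwa [Matrix.transpose_mul, hSx.eq] at h2
  have hkey : ∀ w : Matrix (Fin u) (Fin q) ℝ, Γᵀ * (Sx * (Γ * w)) = w := fun w => by
    rw [← Matrix.mul_assoc, hΓSx, ← Matrix.mul_assoc, hΓ, Matrix.one_mul]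
  -- LHS computation
  have hmat : (Γ * (M⁻¹ * v))ᵀ * Sx * (Γ * (M⁻¹ * v)) = vᵀ * (M⁻¹ * (M⁻¹ * v)) := by
    have e1 : (Γ * (M⁻¹ * v))ᵀ = vᵀ * M⁻¹ * Γᵀ := by
      simp only [Matrix.transpose_mul, hMinvsym, Matrix.mul_assoc]
    rw [e1, Matrix.mul_assoc (vᵀ * M⁻¹) Γᵀ Sx, hΓSx,
      Matrix.mul_assoc (vᵀ * M⁻¹) Γᵀ (Γ * (M⁻¹ * v)),
      ← Matrix.mul_assoc Γᵀ Γ (M⁻¹ * v), hΓ, Matrix.one_mul, Matrix.mul_assoc]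
  have hLHS : (βbar - β)ᵀ * Sx * (βbar - β) = (c^2) • (vᵀ * (M⁻¹ * (M⁻¹ * v))) := by
    rw [hD, Matrix.transpose_smul, Matrix.smul_mul, Matrix.smul_mul, Matrix.mul_smul,
      smul_smul, hmat]
    congr 1
    rw [hc]; ring
  -- RHS: (S + lam • 1) = n⁻¹ • M
  have hSM : S + lam • (1 : Matrix (Fin u) (Fin u) ℝ) = ((n : ℝ)⁻¹) • M := by
    rw [hS, hM, smul_add, smul_smul]
    congr 2
    rw [hc]
    field_simp
  have hsqinv : ((S + lam • 1) ^ 2)⁻¹ = ((n : ℝ)^2) • (M⁻¹ * M⁻¹) := by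
    apply Matrix.inv_eq_right_inv
    rw [pow_two, hSM]
    simp only [Matrix.smul_mul, Matrix.mul_smul, smul_smul]
    have hmm : M * M * (M⁻¹ * M⁻¹) = 1 := by
      rw [Matrix.mul_assoc M M, ← Matrix.mul_assoc M M⁻¹, hMinv, Matrix.one_mul, hMinv]
    rw [hmm]
    have hsc : (n:ℝ) ^ 2 * ((n:ℝ)⁻¹ * (n:ℝ)⁻¹) = 1 := by field_simp
    rw [hsc, one_smul]
  -- conclude via traces
  rw [hLHS, hsqinv]
  rw [Matrix.trace_smul, Matrix.mul_smul, Matrix.trace_smul]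
  have hcyc : (vᵀ * (M⁻¹ * (M⁻¹ * v))).trace
      = (Γᵀ * β * βᵀ * Γ * (M⁻¹ * M⁻¹)).trace := by
    rw [← Matrix.mul_assoc, Matrix.trace_mul_comm, hv]
    simp only [Matrix.transpose_mul, Matrix.transpose_transpose, Matrix.mul_assoc]
    rw [Matrix.trace_mul_comm]
    simp only [Matrix.mul_assoc]
  rw [hcyc, smul_eq_mul, smul_eq_mul, hc]
  ring
end

section
/- Fix λ > 0 and define the population EgReg estimator β̂(ω) = Γ (Γ' X' X Γ + nλ I_u)^{-1} Γ' X' Y(ω) and its mean β̄ = Γ (Γ' X' X Γ + nλ I_u)^{-1} Γ' X' X β*. Then the variance component satisfies 𝔼[ tr( (β̂ − β̄)' Σ_x (β̂ − β̄) ) ] = (1/n) · tr(Σ_ε) · tr( (S + λ I_u)^{-2} S ). -/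
open Matrix MeasureTheory

/-! With B = XΓ and L = (BᵀB + nλ I)⁻¹ Bᵀ, the estimation error is β̂ − β̄ = Γ L E, and since
Γᵀ Σ_x Γ = I the loss is tr(Eᵀ (LᵀL) E). The noise covariance δᵢⱼ (Σ_ε)ₖₗ turns the expectation
of tr(Eᵀ A E) into tr A · tr Σ_ε, and writing BᵀB + nλ I = n (S + λ I) gives
tr(LᵀL) = n⁻¹ tr((S + λ I)⁻² S). -/

namespace Matrix

variable {m n K : Type*} [Fintype m] [DecidableEq m] [Fintype n] [Field K]

-- No invertibility is needed: for singular `A` both sides are the junk value `0`.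
theorem inv_smul_of_ne_zero {A : Matrix m m K} {c : K} (hc : c ≠ 0) :
    (c • A)⁻¹ = c⁻¹ • A⁻¹ := by
  by_cases hA : IsUnit A.det
  · exact inv_smul' A (Units.mk0 c hc) hA
  · have hcA : ¬IsUnit (c • A).det := by
      rwa [det_smul, IsUnit.mul_iff, not_and_or, or_iff_right (by simp [hc])]
    rw [nonsing_inv_apply_not_isUnit _ hA, nonsing_inv_apply_not_isUnit _ hcA, smul_zero]

theorem trace_ridge_transpose_mul_self (B : Matrix n m K) {c : K} (hc : c ≠ 0) (lam : K) :
    (((Bᵀ * B + (c * lam) • 1)⁻¹ * Bᵀ)ᵀ * ((Bᵀ * B + (c * lam) • 1)⁻¹ * Bᵀ)).trace =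
      c⁻¹ * (((c⁻¹ • (Bᵀ * B) + lam • 1) ^ 2)⁻¹ * (c⁻¹ • (Bᵀ * B))).trace := by
  set T := c⁻¹ • (Bᵀ * B) + lam • 1
  have hW : Bᵀ * B + (c * lam) • 1 = c • T := by
    rw [smul_add, smul_smul, smul_smul, mul_inv_cancel₀ hc, one_smul]
  have hT : (T⁻¹)ᵀ = T⁻¹ := by
    rw [transpose_nonsing_inv]; simp [T, transpose_mul]
  rw [hW, inv_smul_of_ne_zero hc, ← inv_pow', trace_mul_comm, transpose_mul, transpose_smul, hT]
  simp only [transpose_transpose, Matrix.mul_smul, Matrix.smul_mul, trace_smul, smul_eq_mul, sq]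
  rw [Matrix.mul_assoc, trace_mul_comm, Matrix.mul_assoc, Matrix.mul_assoc, ← Matrix.mul_assoc Bᵀ,
    trace_mul_comm]

end Matrix

section

variable {Ω m k : Type*} [MeasurableSpace Ω] {P : Measure Ω} [Fintype m] [Fintype k]

theorem integral_trace_transpose_mul_mul [DecidableEq m] {E : Ω → Matrix m k ℝ}
    {C : Matrix k k ℝ} (hL2 : ∀ i a, MemLp (fun ω => E ω i a) 2 P)
    (hcov : ∀ i j a b, ∫ ω, E ω i a * E ω j b ∂P = (if i = j then (1 : ℝ) else 0) * C a b)
    (A : Matrix m m ℝ) :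
    ∫ ω, ((E ω)ᵀ * A * E ω).trace ∂P = A.trace * C.trace := by
  have hint : ∀ a j i, Integrable (fun ω => A i j * (E ω i a * E ω j a)) P := fun a j i =>
    ((hL2 i a).integrable_mul (hL2 j a)).const_mul _
  calc ∫ ω, ((E ω)ᵀ * A * E ω).trace ∂P
      = ∫ ω, ∑ a, ∑ j, ∑ i, A i j * (E ω i a * E ω j a) ∂P := by
        congr 1 with ω
        simp only [trace, diag, mul_apply, transpose_apply, Finset.sum_mul]
        exact Finset.sum_congr rfl fun _ _ => Finset.sum_congr rfl fun _ _ =>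
          Finset.sum_congr rfl fun _ _ => by ring
    _ = ∑ a, ∑ j, ∑ i, A i j * ∫ ω, E ω i a * E ω j a ∂P := by
        rw [integral_finsetSum _ fun a _ => integrable_finsetSum _ fun j _ =>
          integrable_finsetSum _ fun i _ => hint a j i]
        refine Finset.sum_congr rfl fun a _ => ?_
        rw [integral_finsetSum _ fun j _ => integrable_finsetSum _ fun i _ => hint a j i]
        refine Finset.sum_congr rfl fun j _ => ?_
        rw [integral_finsetSum _ fun i _ => hint a j i]
        simp only [integral_const_mul]
    _ = A.trace * C.trace := by
        simp [hcov, trace, Finset.sum_mul_sum, Finset.sum_comm (γ := k), mul_comm]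

end

theorem population_egreg_variance_general
    (n p u q : ℕ) (hn : 0 < n)
    (Γ : Matrix (Fin p) (Fin u) ℝ) (hΓ : Γᵀ * Γ = 1)
    (Sx : Matrix (Fin p) (Fin p) ℝ) (hSxΓ : Sx * Γ = Γ)
    (β : Matrix (Fin p) (Fin q) ℝ)
    (X : Matrix (Fin n) (Fin p) ℝ)
    (S : Matrix (Fin u) (Fin u) ℝ) (hS : S = ((n : ℝ)⁻¹) • (Γᵀ * Xᵀ * X * Γ))
    (Se : Matrix (Fin q) (Fin q) ℝ)
    (lam : ℝ)
    -- probability space and mean-zero noise with Var(vec E) = Σ_ε ⊗ I_n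
    {Ω : Type*} [MeasurableSpace Ω] (P : Measure Ω)
    (E : Ω → Matrix (Fin n) (Fin q) ℝ)
    (hL2 : ∀ i k, MemLp (fun ω => E ω i k) 2 P)
    (hcov : ∀ i j k l, ∫ ω, E ω i k * E ω j l ∂P = (if i = j then (1:ℝ) else 0) * Se k l)
    (Y : Ω → Matrix (Fin n) (Fin q) ℝ) (hY : ∀ ω, Y ω = X * β + E ω)
    -- the population EgReg estimator and its mean
    (βhat : Ω → Matrix (Fin p) (Fin q) ℝ)
    (hβhat : ∀ ω, βhat ω = Γ * (Γᵀ * Xᵀ * X * Γ + ((n : ℝ) * lam) • 1)⁻¹ * Γᵀ * Xᵀ * Y ω)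
    (βbar : Matrix (Fin p) (Fin q) ℝ)
    (hβbar : βbar = Γ * (Γᵀ * Xᵀ * X * Γ + ((n : ℝ) * lam) • 1)⁻¹ * Γᵀ * Xᵀ * X * β) :
    ∫ ω, ((βhat ω - βbar)ᵀ * Sx * (βhat ω - βbar)).trace ∂P =
      ((n : ℝ)⁻¹) * Se.trace * (((S + lam • 1) ^ 2)⁻¹ * S).trace := by
  set B := X * Γ
  have hgram : Γᵀ * Xᵀ * X * Γ = Bᵀ * B := by simp only [B, transpose_mul, Matrix.mul_assoc]
  set L := (Bᵀ * B + ((n : ℝ) * lam) • 1)⁻¹ * Bᵀ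
  have herr : ∀ ω, βhat ω - βbar = Γ * (L * E ω) := fun ω => by
    rw [hβhat, hβbar, hY, hgram]
    simp only [L, B, transpose_mul, Matrix.mul_add, Matrix.mul_assoc, add_sub_cancel_left]
  have hquad : ∀ ω, ((βhat ω - βbar)ᵀ * Sx * (βhat ω - βbar)).trace
      = ((E ω)ᵀ * (Lᵀ * L) * E ω).trace := fun ω => by
    rw [herr]
    simp only [transpose_mul, Matrix.mul_assoc]
    rw [← Matrix.mul_assoc Sx, hSxΓ, ← Matrix.mul_assoc Γᵀ, hΓ, Matrix.one_mul]
  simp only [hquad]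
  rw [integral_trace_transpose_mul_mul hL2 hcov,
    trace_ridge_transpose_mul_self B (Nat.cast_ne_zero.2 hn.ne'), hS, hgram]
  ring

theorem population_egreg_variance
    (n p u q : ℕ) (hn : 0 < n) (hp : 0 < p) (hu : 0 < u) (hq : 0 < q)
    (Γ : Matrix (Fin p) (Fin u) ℝ) (hΓ : Γᵀ * Γ = 1)
    (Sx : Matrix (Fin p) (Fin p) ℝ) (hSx : Sx.IsSymm) (hSxΓ : Sx * Γ = Γ)
    (β : Matrix (Fin p) (Fin q) ℝ) (hβ : β = Γ * Γᵀ * β)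
    (X : Matrix (Fin n) (Fin p) ℝ)
    (S : Matrix (Fin u) (Fin u) ℝ) (hS : S = ((n : ℝ)⁻¹) • (Γᵀ * Xᵀ * X * Γ))
    (Se : Matrix (Fin q) (Fin q) ℝ) (hSe : Se.PosSemidef)
    (lam : ℝ) (hlam : 0 < lam)
    -- probability space and mean-zero noise with Var(vec E) = Σ_ε ⊗ I_n
    {Ω : Type*} [MeasurableSpace Ω] (P : Measure Ω) [IsProbabilityMeasure P]
    (E : Ω → Matrix (Fin n) (Fin q) ℝ)
    (hL2 : ∀ i k, MemLp (fun ω => E ω i k) 2 P)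
    (hmean : ∀ i k, ∫ ω, E ω i k ∂P = 0)
    (hcov : ∀ i j k l, ∫ ω, E ω i k * E ω j l ∂P = (if i = j then (1:ℝ) else 0) * Se k l)
    (Y : Ω → Matrix (Fin n) (Fin q) ℝ) (hY : ∀ ω, Y ω = X * β + E ω)
    -- the population EgReg estimator and its mean
    (βhat : Ω → Matrix (Fin p) (Fin q) ℝ)
    (hβhat : ∀ ω, βhat ω = Γ * (Γᵀ * Xᵀ * X * Γ + ((n : ℝ) * lam) • 1)⁻¹ * Γᵀ * Xᵀ * Y ω)
    (βbar : Matrix (Fin p) (Fin q) ℝ)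
    (hβbar : βbar = Γ * (Γᵀ * Xᵀ * X * Γ + ((n : ℝ) * lam) • 1)⁻¹ * Γᵀ * Xᵀ * X * β) :
    ∫ ω, ((βhat ω - βbar)ᵀ * Sx * (βhat ω - βbar)).trace ∂P =
      ((n : ℝ)⁻¹) * Se.trace * (((S + lam • 1) ^ 2)⁻¹ * S).trace :=
  population_egreg_variance_general n p u q hn Γ hΓ Sx hSxΓ β X S hS Se lam P E hL2 hcov Y hY βhat
    hβhat βbar hβbar
end

section
/- Suppose γ > 1. Then, as z → 0 from the left, (−z)·m(z) → (γ − 1)/γ, z²·m'(z) → (γ − 1)/γ, and m(z) + z·m'(z) → 1/((γ − 1)γ). -/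
/-
Write `m(z) = g(z) / z` with `g(z) = (1 − γ − z − √((1 − γ − z)² − 4γz)) / (2γ)`. At `z = 0` the
discriminant is `(γ − 1)² ≠ 0`, so `g` is smooth near `0`, and for `z ≠ 0`
`−z m = −g`, `z² m' = z g' − g` and `m + z m' = g'`. The three limits are therefore
`−g(0) = (γ − 1)/γ`, `−g(0)` again, and `g'(0) = 1/((γ − 1)γ)`.
-/

open Filter Topology

/-- The Stieltjes transform of the Marchenko–Pastur law with ratio `γ`,
defined for `z < 0` by `m(z) = (1 − γ − z − √((1 − γ − z)² − 4γz)) / (2γz)`. -/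
noncomputable def mMP (γ z : ℝ) : ℝ :=
  (1 - γ - z - Real.sqrt ((1 - γ - z) ^ 2 - 4 * γ * z)) / (2 * γ * z)

section DivId

variable {g : ℝ → ℝ}

lemma deriv_div_id_of_differentiableAt {z : ℝ} (hg : DifferentiableAt ℝ g z) (hz : z ≠ 0) :
    deriv (fun y => g y / y) z = (deriv g z * z - g z) / z ^ 2 := by
  rw [(hg.hasDerivAt.fun_div (hasDerivAt_id' z) hz).deriv, mul_one]

lemma tendsto_neg_mul_div_id (hg : ContinuousAt g 0) :
    Tendsto (fun z => -z * (g z / z)) (𝓝[≠] 0) (𝓝 (-g 0)) := by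
  refine (hg.tendsto.neg.mono_left nhdsWithin_le_nhds).congr' ?_
  filter_upwards [self_mem_nhdsWithin] with z (hz : z ≠ 0)
  field_simp

lemma eventually_div_id_add_mul_deriv_div_id_eq_deriv (hg : ContDiffAt ℝ 1 g 0) :
    ∀ᶠ z in 𝓝[≠] 0, g z / z + z * deriv (fun y => g y / y) z = deriv g z := by
  filter_upwards [nhdsWithin_le_nhds (hg.eventually (by simp)), self_mem_nhdsWithin]
    with z hgz (hz : z ≠ 0)
  rw [deriv_div_id_of_differentiableAt (hgz.differentiableAt one_ne_zero) hz]
  field_simp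
  ring

lemma tendsto_div_id_add_mul_deriv_div_id (hg : ContDiffAt ℝ 1 g 0) :
    Tendsto (fun z => g z / z + z * deriv (fun y => g y / y) z) (𝓝[≠] 0) (𝓝 (deriv g 0)) :=
  ((hg.derivWithin (m := 0) (by norm_num)).continuousAt.tendsto.mono_left
    nhdsWithin_le_nhds).congr'
    ((eventually_div_id_add_mul_deriv_div_id_eq_deriv hg).mono fun _ h => h.symm)

lemma tendsto_sq_mul_deriv_div_id (hg : ContDiffAt ℝ 1 g 0) :
    Tendsto (fun z => z ^ 2 * deriv (fun y => g y / y) z) (𝓝[≠] 0) (𝓝 (-g 0)) := by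
  have hlim : Tendsto (fun z => z * (g z / z + z * deriv (fun y => g y / y) z) - g z)
      (𝓝[≠] 0) (𝓝 (0 * deriv g 0 - g 0)) :=
    ((tendsto_nhdsWithin_of_tendsto_nhds tendsto_id).mul
      (tendsto_div_id_add_mul_deriv_div_id hg)).sub
      (hg.continuousAt.tendsto.mono_left nhdsWithin_le_nhds)
  rw [zero_mul, zero_sub] at hlim
  refine hlim.congr' ?_
  filter_upwards [self_mem_nhdsWithin] with z (hz : z ≠ 0)
  field_simp
  ring

end DivId

noncomputable def zMulMMP (γ z : ℝ) : ℝ :=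
  (1 - γ - z - Real.sqrt ((1 - γ - z) ^ 2 - 4 * γ * z)) / (2 * γ)

lemma mMP_eq_zMulMMP_div (γ : ℝ) : mMP γ = fun z => zMulMMP γ z / z := by
  ext z
  rw [mMP, zMulMMP, div_div]

lemma contDiffAt_zMulMMP {γ z : ℝ} {n : WithTop ℕ∞} (hz : (1 - γ - z) ^ 2 - 4 * γ * z ≠ 0) :
    ContDiffAt ℝ n (zMulMMP γ) z := by
  unfold zMulMMP
  fun_prop (disch := assumption)

lemma discr_at_zero (γ : ℝ) : (1 - γ - 0) ^ 2 - 4 * γ * 0 = (γ - 1) ^ 2 := by ring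

lemma discr_at_zero_ne_zero {γ : ℝ} (hγ : γ ≠ 1) : (1 - γ - 0) ^ 2 - 4 * γ * 0 ≠ 0 := by
  rw [discr_at_zero]
  exact pow_ne_zero 2 (sub_ne_zero.2 hγ)

lemma sqrt_discr_at_zero {γ : ℝ} (hγ : 1 ≤ γ) :
    Real.sqrt ((1 - γ - 0) ^ 2 - 4 * γ * 0) = γ - 1 := by
  rw [discr_at_zero, Real.sqrt_sq (by linarith)]

lemma zMulMMP_zero {γ : ℝ} (hγ : 1 ≤ γ) : zMulMMP γ 0 = (1 - γ) / γ := by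
  rw [zMulMMP, sqrt_discr_at_zero hγ]
  ring

lemma hasDerivAt_zMulMMP_zero {γ : ℝ} (hγ : 1 < γ) :
    HasDerivAt (zMulMMP γ) (1 / ((γ - 1) * γ)) 0 := by
  have hlin := (hasDerivAt_id' (0 : ℝ)).const_sub (1 - γ)
  have hdiscr := (hlin.fun_pow 2).fun_sub ((hasDerivAt_id' (0 : ℝ)).const_mul (4 * γ))
  refine ((hlin.fun_sub (hdiscr.sqrt (discr_at_zero_ne_zero hγ.ne'))).div_const
    (2 * γ)).congr_deriv ?_
  rw [sqrt_discr_at_zero hγ.le]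
  have : γ - 1 ≠ 0 := sub_ne_zero.2 hγ.ne'
  have : γ ≠ 0 := by linarith
  field_simp
  ring

theorem mMP_limits_at_zero_of_gamma_gt_one (γ : ℝ) (hγ : 1 < γ) :
    Tendsto (fun z => (-z) * mMP γ z) (𝓝[<] 0) (𝓝 ((γ - 1) / γ)) ∧
    Tendsto (fun z => z ^ 2 * deriv (mMP γ) z) (𝓝[<] 0) (𝓝 ((γ - 1) / γ)) ∧
    Tendsto (fun z => mMP γ z + z * deriv (mMP γ) z) (𝓝[<] 0) (𝓝 (1 / ((γ - 1) * γ))) := by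
  have hg : ContDiffAt ℝ 1 (zMulMMP γ) 0 := contDiffAt_zMulMMP (discr_at_zero_ne_zero hγ.ne')
  have hg0 : -zMulMMP γ 0 = (γ - 1) / γ := by rw [zMulMMP_zero hγ.le]; ring
  rw [← hg0, ← (hasDerivAt_zMulMMP_zero hγ).deriv, mMP_eq_zMulMMP_div]
  exact ⟨(tendsto_neg_mul_div_id hg.continuousAt).mono_left (nhdsLT_le_nhdsNE 0),
    (tendsto_sq_mul_deriv_div_id hg).mono_left (nhdsLT_le_nhdsNE 0),
    (tendsto_div_id_add_mul_deriv_div_id hg).mono_left (nhdsLT_le_nhdsNE 0)⟩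
end

section
/- Let T > 0 and c > 0, and define the limiting EgReg risk function r(λ) = c² λ² m'(−λ) + T γ (m(−λ) − λ m'(−λ)) for λ > 0. If 0 < γ < 1, then lim_{λ→0+} r(λ) = T γ / (1 − γ); if γ > 1, then lim_{λ→0+} r(λ) = c² (1 − 1/γ) + T / (γ − 1). -/
/-!
Rationalising the numerator gives `m(z) = 2 / (f + s)` with `f = 1 − γ − z` and
`s = √(f² − 4γz)`, so that `m' = 2 (s + f + 2γ) / (s (f + s)²)`. Using `s² = f² − 4γz`, both
`z² m'(z)` and `m(z) + z m'(z)` become rational functions of `s − f` and `s`, which extend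
continuously to `z = 0` because there `s = |1 − γ| ≠ 0`. Evaluating at `z = 0`, where
`s − f = |1 − γ| − (1 − γ)` vanishes for `γ < 1` and equals `2 (γ − 1)` for `γ > 1`, gives the
two limits.
-/

open Filter Topology

/-- The limiting EgReg risk function
`r(λ) = c² λ² m'(−λ) + T γ (m(−λ) − λ m'(−λ))` for `λ > 0`. -/
noncomputable def limRisk (γ T c lam : ℝ) : ℝ :=
  c ^ 2 * lam ^ 2 * deriv (mMP γ) (-lam) +
    T * γ * (mMP γ (-lam) - lam * deriv (mMP γ) (-lam))

noncomputable def mpSqrt (γ z : ℝ) : ℝ := √((1 - γ - z) ^ 2 - 4 * γ * z)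

section

variable {γ z : ℝ}

@[fun_prop]
lemma continuous_mpSqrt : Continuous (mpSqrt γ) := by
  unfold mpSqrt
  fun_prop

lemma mpSqrt_zero : mpSqrt γ 0 = |1 - γ| := by
  simp [mpSqrt, Real.sqrt_sq_eq_abs]

lemma mpSqrt_zero_ne_zero (hγ : γ ≠ 1) : mpSqrt γ 0 ≠ 0 :=
  mpSqrt_zero ▸ abs_ne_zero.2 (sub_ne_zero.2 hγ.symm)

lemma mpDisc_pos (hγ : 0 < γ) (hz : z < 0) : 0 < (1 - γ - z) ^ 2 - 4 * γ * z := by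
  nlinarith [sq_nonneg (1 - γ - z), mul_pos hγ (neg_pos.2 hz)]

lemma mpSqrt_pos (hγ : 0 < γ) (hz : z < 0) : 0 < mpSqrt γ z :=
  Real.sqrt_pos.2 (mpDisc_pos hγ hz)

lemma mpSqrt_sq (hγ : 0 < γ) (hz : z < 0) :
    mpSqrt γ z ^ 2 = (1 - γ - z) ^ 2 - 4 * γ * z :=
  Real.sq_sqrt (mpDisc_pos hγ hz).le

lemma add_mpSqrt_pos (hγ : 0 < γ) (hz : z < 0) : 0 < 1 - γ - z + mpSqrt γ z := by
  nlinarith [mpSqrt_sq hγ hz, mpSqrt_pos hγ hz, mul_pos hγ (neg_pos.2 hz)]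

lemma mMP_eq_two_div (hγ : 0 < γ) (hz : z < 0) :
    mMP γ z = 2 / (1 - γ - z + mpSqrt γ z) := by
  have hγz : 2 * γ * z ≠ 0 := mul_ne_zero (by positivity) hz.ne
  rw [mMP, ← mpSqrt, div_eq_div_iff hγz (add_mpSqrt_pos hγ hz).ne']
  linear_combination -(mpSqrt_sq hγ hz)

lemma hasDerivAt_mpSqrt (hγ : 0 < γ) (hz : z < 0) :
    HasDerivAt (mpSqrt γ) (-(1 + γ - z) / mpSqrt γ z) z := by
  have hf : HasDerivAt (fun w => 1 - γ - w) (-1) z := by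
    simpa using (hasDerivAt_id z).const_sub (1 - γ)
  have h : HasDerivAt (mpSqrt γ)
      ((2 * (1 - γ - z) ^ (2 - 1) * -1 - 4 * γ * 1) / (2 * mpSqrt γ z)) z :=
    ((hf.pow 2).sub ((hasDerivAt_id' z).const_mul (4 * γ))).sqrt (mpDisc_pos hγ hz).ne'
  refine h.congr_deriv ?_
  have hs := (mpSqrt_pos hγ hz).ne'
  field_simp
  ring

lemma hasDerivAt_mMP (hγ : 0 < γ) (hz : z < 0) :
    HasDerivAt (mMP γ)
      (2 * (mpSqrt γ z + (1 - γ - z) + 2 * γ) /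
        (mpSqrt γ z * (1 - γ - z + mpSqrt γ z) ^ 2)) z := by
  have hs := (mpSqrt_pos hγ hz).ne'
  have hsum := (add_mpSqrt_pos hγ hz).ne'
  have hf : HasDerivAt (fun w => 1 - γ - w) (-1) z := by
    simpa using (hasDerivAt_id z).const_sub (1 - γ)
  have h : HasDerivAt (fun w => 2 / (1 - γ - w + mpSqrt γ w)) _ z :=
    (hasDerivAt_const z (2 : ℝ)).div (hf.add (hasDerivAt_mpSqrt hγ hz)) hsum
  refine (h.congr_of_eventuallyEq ?_).congr_deriv ?_
  · filter_upwards [Iio_mem_nhds hz] with w hw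
    exact mMP_eq_two_div hγ hw
  · field_simp
    ring

lemma sq_mul_deriv_mMP (hγ : 0 < γ) (hz : z < 0) :
    z ^ 2 * deriv (mMP γ) z =
      (mpSqrt γ z - (1 - γ - z) - 2 * z) * (mpSqrt γ z - (1 - γ - z)) /
        (4 * γ * mpSqrt γ z) := by
  have hs := mpSqrt_pos hγ hz
  have hsum := add_mpSqrt_pos hγ hz
  rw [(hasDerivAt_mMP hγ hz).deriv, mul_div_assoc',
    div_eq_div_iff (by positivity) (by positivity)]
  linear_combination (2 * mpSqrt γ z * z * (mpSqrt γ z + (1 - γ - z) + 2 * γ) -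
    mpSqrt γ z * (mpSqrt γ z - (1 - γ - z)) * (mpSqrt γ z + (1 - γ - z))) * mpSqrt_sq hγ hz

lemma mMP_add_mul_deriv_mMP (hγ : 0 < γ) (hz : z < 0) :
    mMP γ z + z * deriv (mMP γ) z =
      (2 * γ - (mpSqrt γ z - (1 - γ - z))) / (2 * γ * mpSqrt γ z) := by
  have hs := mpSqrt_pos hγ hz
  have hsum := add_mpSqrt_pos hγ hz
  rw [(hasDerivAt_mMP hγ hz).deriv, mMP_eq_two_div hγ hz, mul_div_assoc',
    div_add_div _ _ hsum.ne' (by positivity), div_eq_div_iff (by positivity) (by positivity)]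
  linear_combination (mpSqrt γ z * (mpSqrt γ z + (1 - γ - z)) *
    (mpSqrt γ z + (1 - γ - z) + 2 * γ)) * mpSqrt_sq hγ hz

lemma tendsto_sq_mul_deriv_mMP (hγ : 0 < γ) (hγ1 : γ ≠ 1) :
    Tendsto (fun z => z ^ 2 * deriv (mMP γ) z) (𝓝[<] 0)
      (𝓝 ((|1 - γ| - (1 - γ)) ^ 2 / (4 * γ * |1 - γ|))) := by
  have hP : ContinuousAt (fun z => (mpSqrt γ z - (1 - γ - z) - 2 * z) *
      (mpSqrt γ z - (1 - γ - z)) / (4 * γ * mpSqrt γ z)) 0 :=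
    ContinuousAt.div (by fun_prop) (by fun_prop)
      (mul_ne_zero (by positivity) (mpSqrt_zero_ne_zero hγ1))
  convert (hP.tendsto.mono_left nhdsWithin_le_nhds).congr' ?_ using 2
  · simp [mpSqrt_zero, sq]
  · filter_upwards [self_mem_nhdsWithin] with z hz
    exact (sq_mul_deriv_mMP hγ hz).symm

lemma tendsto_mMP_add_mul_deriv_mMP (hγ : 0 < γ) (hγ1 : γ ≠ 1) :
    Tendsto (fun z => mMP γ z + z * deriv (mMP γ) z) (𝓝[<] 0)
      (𝓝 ((2 * γ - (|1 - γ| - (1 - γ))) / (2 * γ * |1 - γ|))) := by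
  have hP : ContinuousAt (fun z => (2 * γ - (mpSqrt γ z - (1 - γ - z))) /
      (2 * γ * mpSqrt γ z)) 0 :=
    ContinuousAt.div (by fun_prop) (by fun_prop)
      (mul_ne_zero (by positivity) (mpSqrt_zero_ne_zero hγ1))
  convert (hP.tendsto.mono_left nhdsWithin_le_nhds).congr' ?_ using 2
  · simp [mpSqrt_zero]
  · filter_upwards [self_mem_nhdsWithin] with z hz
    exact (mMP_add_mul_deriv_mMP hγ hz).symm

lemma tendsto_limRisk (T c : ℝ) (hγ : 0 < γ) (hγ1 : γ ≠ 1) :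
    Tendsto (limRisk γ T c) (𝓝[>] 0)
      (𝓝 (c ^ 2 * ((|1 - γ| - (1 - γ)) ^ 2 / (4 * γ * |1 - γ|)) +
        T * γ * ((2 * γ - (|1 - γ| - (1 - γ))) / (2 * γ * |1 - γ|)))) := by
  have hneg : Tendsto (fun lam : ℝ => -lam) (𝓝[>] 0) (𝓝[<] 0) := by
    simpa using tendsto_neg_nhdsGT_neg (a := (0 : ℝ))
  refine ((((tendsto_sq_mul_deriv_mMP hγ hγ1).comp hneg).const_mul (c ^ 2)).add
    (((tendsto_mMP_add_mul_deriv_mMP hγ hγ1).comp hneg).const_mul (T * γ))).congr fun lam => ?_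
  simp only [limRisk, Function.comp_apply, neg_sq, neg_mul, ← sub_eq_add_neg]
  ring

end

theorem limit_of_limRisk_at_zero_general (γ T c : ℝ) :
    (0 < γ → γ < 1 →
      Tendsto (fun lam => limRisk γ T c lam) (𝓝[>] 0) (𝓝 (T * γ / (1 - γ)))) ∧
    (1 < γ →
      Tendsto (fun lam => limRisk γ T c lam) (𝓝[>] 0)
        (𝓝 (c ^ 2 * (1 - 1 / γ) + T / (γ - 1)))) := by
  refine ⟨fun hγ hγ1 => ?_, fun hγ1 => ?_⟩
  · convert tendsto_limRisk T c hγ hγ1.ne using 2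
    have : 1 - γ ≠ 0 := sub_ne_zero.2 hγ1.ne'
    rw [abs_of_pos (sub_pos.2 hγ1)]
    field_simp
    ring
  · convert tendsto_limRisk T c (by linarith) hγ1.ne' using 2
    have : γ - 1 ≠ 0 := sub_ne_zero.2 hγ1.ne'
    have : γ ≠ 0 := by positivity
    rw [abs_of_neg (sub_neg.2 hγ1), neg_sub]
    field_simp
    ring

theorem limit_of_limRisk_at_zero (γ T c : ℝ) (hT : 0 < T) (hc : 0 < c) :
    (0 < γ → γ < 1 →
      Tendsto (fun lam => limRisk γ T c lam) (𝓝[>] 0) (𝓝 (T * γ / (1 - γ)))) ∧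
    (1 < γ →
      Tendsto (fun lam => limRisk γ T c lam) (𝓝[>] 0)
        (𝓝 (c ^ 2 * (1 - 1 / γ) + T / (γ - 1)))) :=
  limit_of_limRisk_at_zero_general γ T c
end
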